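/- arXiv:2410.18049 — 4 statements merged into one kernel-verified Lean document; each statement's English description precedes it below -/
import Mathlib

section
/- Let p : E → B be a fibration of groupoids and B an object of B. Under the action of Aut_B(B) on π₀(Fib(p,B)) given by lifting morphisms, the stabiliser of the class [A] of an object A in the fibre is exactly the image p_*(Aut_E(A)) of the automorphism group of A in E. -/
open CategoryTheory

universe u u'

variable {E : Type u} [Groupoid E] {B : Type u'} [Groupoid B]

/-- A fibration of groupoids: every morphism of the base with target `p.obj e`
lifts to a morphism of the total groupoid with target `e`. -/
def IsGrpdFibration (p : E ⥤ B) : Prop :=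
  ∀ (e : E) (b' : B) (h : b' ⟶ p.obj e),
    ∃ (e' : E) (g : e' ⟶ e) (he : p.obj e' = b'), p.map g = eqToHom he ≫ h

/-- The fibre of a functor of groupoids at an object of the base. -/
structure Fib (p : E ⥤ B) (b : B) where
  pt : E
  over' : p.obj pt = b

/-- The fibre is a groupoid: morphisms are the morphisms of `E` mapping to the identity. -/
instance fibGroupoid (p : E ⥤ B) (b : B) : Groupoid (Fib p b) where
  Hom a a' := {f : a.pt ⟶ a'.pt // p.map f = eqToHom (a.over'.trans a'.over'.symm)}
  id a := ⟨𝟙 a.pt, by simp⟩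
  comp f g := ⟨f.1 ≫ g.1, by rw [Functor.map_comp, f.2, g.2, eqToHom_trans]⟩
  id_comp f := Subtype.ext (Category.id_comp f.1)
  comp_id f := Subtype.ext (Category.comp_id f.1)
  assoc f g h := Subtype.ext (Category.assoc f.1 g.1 h.1)
  inv f := ⟨Groupoid.inv f.1, by
    rw [Groupoid.inv_eq_inv, Functor.map_inv]
    exact IsIso.inv_eq_of_hom_inv_id (by rw [f.2, eqToHom_trans, eqToHom_refl])⟩
  inv_comp f := Subtype.ext (Groupoid.inv_comp f.1)
  comp_inv f := Subtype.ext (Groupoid.comp_inv f.1)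

/-! An automorphism of `A` over `g` is itself a lift of `g` with source `A`, so `g` fixes `[A]`.
Conversely, if `g` fixes `[A]`, the source `A_g` of a lift `ĝ : A_g ⟶ A` is isomorphic to `A`
in the fibre, and precomposing `ĝ` with such an isomorphism gives an automorphism of `A` over `g`. -/

theorem IsGrpdFibration.exists_fib_lift {p : E ⥤ B} (hp : IsGrpdFibration p) {b b' : B}
    (X : Fib p b) (g : b' ⟶ b) :
    ∃ (Xg : Fib p b') (glift : Xg.pt ⟶ X.pt),
      p.map glift = eqToHom Xg.over' ≫ g ≫ eqToHom X.over'.symm := by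
  obtain ⟨e, glift, he, hmap⟩ := hp X.pt b' (g ≫ eqToHom X.over'.symm)
  exact ⟨⟨e, he⟩, glift, hmap⟩

theorem Fib.map_hom_comp_lift {p : E ⥤ B} {b b' : B} {Y X : Fib p b'} {Z : Fib p b}
    (j : Y ⟶ X) (f : X.pt ⟶ Z.pt) {g : b' ⟶ b}
    (hf : p.map f = eqToHom X.over' ≫ g ≫ eqToHom Z.over'.symm) :
    p.map (j.1 ≫ f) = eqToHom Y.over' ≫ g ≫ eqToHom Z.over'.symm := by
  rw [Functor.map_comp, j.2, hf, eqToHom_trans_assoc]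

/-- For a fibration of groupoids and the lifting action of `Aut_B(b)` on `π₀(Fib(p,b))`,
the stabiliser of the class of an object `A` of the fibre is exactly the image
`p_*(Aut_E(A))` of the automorphism group of `A` in `E`. -/
theorem stabilizer_eq_image_aut (p : E ⥤ B) (hp : IsGrpdFibration p) (b : B)
    (act : MulAction (Aut b) (Quotient (isIsomorphicSetoid (Fib p b))))
    (hact : ∀ (g : Aut b) (X Xg : Fib p b) (glift : Xg.pt ⟶ X.pt),
        p.map glift = eqToHom Xg.over' ≫ g.hom ≫ eqToHom X.over'.symm →
        act.smul g (Quotient.mk (isIsomorphicSetoid (Fib p b)) X)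
          = Quotient.mk (isIsomorphicSetoid (Fib p b)) Xg)
    (A : Fib p b) :
    {g : Aut b | act.smul g (Quotient.mk (isIsomorphicSetoid (Fib p b)) A)
        = Quotient.mk (isIsomorphicSetoid (Fib p b)) A}
      = {g : Aut b | ∃ f : A.pt ⟶ A.pt,
          p.map f = eqToHom A.over' ≫ g.hom ≫ eqToHom A.over'.symm} := by
  ext g
  constructor
  · intro hg
    obtain ⟨Xg, glift, hlift⟩ := hp.exists_fib_lift A g.hom
    have hXg : Quotient.mk (isIsomorphicSetoid (Fib p b)) Xg
        = Quotient.mk (isIsomorphicSetoid (Fib p b)) A :=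
      (hact g A Xg glift hlift).symm.trans hg
    obtain ⟨j⟩ := Quotient.exact hXg
    exact ⟨j.inv.1 ≫ glift, Fib.map_hom_comp_lift j.inv glift hlift⟩
  · rintro ⟨f, hf⟩
    exact hact g A A f hf
end

section
/- Let G₁ ←P₁− H →P₂→ G₂ be a fibrant span of essentially finite groupoids, ρᵢ : Gᵢ → Vect_ℂ representations, and σ : ρ₁P₁ ⇒ ρ₂P₂ a natural transformation. Fix objects G₁ ∈ G₁, G₂ ∈ G₂ and let R be a set of representatives of the isomorphism classes of the fibre {G₁|H|G₂} of ⟨P₁,P₂⟩ at (G₁,G₂). Then the linear map S = (1/|Aut_{G₂}(G₂)|) · Σ_{H ∈ R} (1/|Aut_{{G₁|H|G₂}}(H)|) · σ_H : ρ₁(G₁) → ρ₂(G₂) takes values in the invariant subspace ρ₂(G₂)^{Aut_{G₂}(G₂)}. -/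
open CategoryTheory

set_option synthInstance.maxHeartbeats 1000000

universe v u

variable {𝒢 G₁ G₂ : Type u} [Groupoid 𝒢] [Groupoid G₁] [Groupoid G₂]

/-- A span of groupoids `G₁ ← 𝒢 → G₂` is fibrant if the induced functor
`⟨P₁,P₂⟩ : 𝒢 → G₁ × G₂` is a fibration of groupoids. -/
def IsFibrantSpan (P₁ : 𝒢 ⥤ G₁) (P₂ : 𝒢 ⥤ G₂) : Prop :=
  ∀ (H : 𝒢) (g₁ : G₁) (g₂ : G₂) (u₁ : g₁ ⟶ P₁.obj H) (u₂ : g₂ ⟶ P₂.obj H),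
    ∃ (H' : 𝒢) (f : H' ⟶ H) (e₁ : P₁.obj H' = g₁) (e₂ : P₂.obj H' = g₂),
      P₁.map f = eqToHom e₁ ≫ u₁ ∧ P₂.map f = eqToHom e₂ ≫ u₂

/-- A groupoid is essentially finite if it is equivalent to a finite groupoid; equivalently,
it has finitely many isomorphism classes of objects and all Hom-sets are finite. -/
def EssentiallyFinite (C : Type*) [Category C] : Prop :=
  Finite (Quotient (isIsomorphicSetoid C)) ∧ ∀ X Y : C, Finite (X ⟶ Y)

/-- The fibre `{G₁|𝒢|G₂}` of a span of groupoids at a pair of objects `(g₁, g₂)`. -/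
structure SpanFib (P₁ : 𝒢 ⥤ G₁) (P₂ : 𝒢 ⥤ G₂) (g₁ : G₁) (g₂ : G₂) where
  pt : 𝒢
  over₁ : P₁.obj pt = g₁
  over₂ : P₂.obj pt = g₂

/-- The fibre of a span is a groupoid, with morphisms the morphisms of `𝒢` lying over the
identities of `g₁` and `g₂`. -/
instance spanFibGroupoid (P₁ : 𝒢 ⥤ G₁) (P₂ : 𝒢 ⥤ G₂) (g₁ : G₁) (g₂ : G₂) :
    Groupoid (SpanFib P₁ P₂ g₁ g₂) where
  Hom a a' := {f : a.pt ⟶ a'.pt // P₁.map f = eqToHom (a.over₁.trans a'.over₁.symm)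
      ∧ P₂.map f = eqToHom (a.over₂.trans a'.over₂.symm)}
  id a := ⟨𝟙 a.pt, by simp⟩
  comp f g := ⟨f.1 ≫ g.1, by
    constructor
    · rw [Functor.map_comp, f.2.1, g.2.1, eqToHom_trans]
    · rw [Functor.map_comp, f.2.2, g.2.2, eqToHom_trans]⟩
  id_comp f := Subtype.ext (Category.id_comp f.1)
  comp_id f := Subtype.ext (Category.comp_id f.1)
  assoc f g h := Subtype.ext (Category.assoc f.1 g.1 h.1)
  inv f := ⟨Groupoid.inv f.1, by
    constructor
    · rw [Groupoid.inv_eq_inv, Functor.map_inv]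
      exact IsIso.inv_eq_of_hom_inv_id (by rw [f.2.1, eqToHom_trans, eqToHom_refl])
    · rw [Groupoid.inv_eq_inv, Functor.map_inv]
      exact IsIso.inv_eq_of_hom_inv_id (by rw [f.2.2, eqToHom_trans, eqToHom_refl])⟩
  inv_comp f := Subtype.ext (Groupoid.inv_comp f.1)
  comp_inv f := Subtype.ext (Groupoid.comp_inv f.1)

/-! Lifting `g ∈ Aut g₂` backwards through the fibration sends each fibre object `H` to an
object `T H` with a morphism `T H ⟶ H` over `(𝟙 g₁, g⁻¹)`. Conjugating by that morphism
identifies the fibre automorphism groups of `T H` and `H`, lifting `g` instead shows that `T`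
permutes the isomorphism classes of the fibre, and naturality of `σ` gives
`σ_H ≫ ρ₂(g) = σ_{T H}`. So composing with `ρ₂(g)` only permutes the terms of the sum. -/

theorem Finset.sum_comp_eq_sum_of_transversal {α M : Type*} [AddCommMonoid M]
    {r : α → α → Prop} (hr : Equivalence r) {R : Finset α} (hR : ∀ a, ∃! x, x ∈ R ∧ r a x)
    {F : α → M} (hF : ∀ a b, r a b → F a = F b) {T : α → α}
    (hT : ∀ a b, r (T a) (T b) ↔ r a b) (hT_surj : ∀ b, ∃ a, r (T a) b) :
    ∑ x ∈ R, F (T x) = ∑ x ∈ R, F x := by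
  choose rep hrep huniq using hR
  have rep_eq {a x : α} (hx : x ∈ R) (h : r a x) : rep a = x := (huniq a x ⟨hx, h⟩).symm
  refine Finset.sum_nbij (fun x => rep (T x)) (fun x _ => (hrep _).1) ?_ ?_
    (fun x _ => hF _ _ (hrep _).2)
  · intro x hx y hy (hxy : rep (T x) = rep (T y))
    have hTxy : r (T x) (T y) := hr.trans (hrep (T x)).2 (hxy ▸ hr.symm (hrep (T y)).2)
    exact (rep_eq hx (hr.refl x)).symm.trans (rep_eq hy ((hT x y).1 hTxy))
  · intro y hy
    obtain ⟨a, ha⟩ := hT_surj y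
    exact ⟨rep a, (hrep a).1, rep_eq hy (hr.trans ((hT _ _).2 (hr.symm (hrep a).2)) ha)⟩

namespace SpanFib

variable {P₁ : 𝒢 ⥤ G₁} {P₂ : 𝒢 ⥤ G₂} {g₁ : G₁} {g₂ : G₂}

def LiesOver (u : g₂ ⟶ g₂) {A B : SpanFib P₁ P₂ g₁ g₂} (f : A.pt ⟶ B.pt) : Prop :=
  P₁.map f = eqToHom (A.over₁.trans B.over₁.symm) ∧
    P₂.map f = eqToHom A.over₂ ≫ u ≫ eqToHom B.over₂.symm

variable {u u' : g₂ ⟶ g₂} {A A' B B' C : SpanFib P₁ P₂ g₁ g₂}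

theorem LiesOver.comp {f : A.pt ⟶ B.pt} {f' : B.pt ⟶ C.pt} (h : LiesOver u f)
    (h' : LiesOver u' f') : LiesOver (u ≫ u') (f ≫ f') := by
  constructor
  · rw [Functor.map_comp, h.1, h'.1, eqToHom_trans]
  · simp [h.2, h'.2]

theorem LiesOver.inv {f : A.pt ⟶ B.pt} (h : LiesOver u f) :
    LiesOver (Groupoid.inv u) (Groupoid.inv f) := by
  simp only [LiesOver, Groupoid.inv_eq_inv, Functor.map_inv]
  constructor
  · exact IsIso.inv_eq_of_hom_inv_id (by rw [h.1, eqToHom_trans, eqToHom_refl])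
  · exact IsIso.inv_eq_of_hom_inv_id (by simp [h.2])

theorem liesOver_hom (m : A ⟶ B) : LiesOver (𝟙 g₂) m.1 :=
  ⟨m.2.1, by rw [m.2.2]; simp⟩

def LiesOver.toHom {f : A.pt ⟶ B.pt} (h : LiesOver (𝟙 g₂) f) : A ⟶ B :=
  ⟨f, h.1, by rw [h.2]; simp⟩

theorem LiesOver.isIsomorphic_iff {f : A.pt ⟶ B.pt} {f' : A'.pt ⟶ B'.pt}
    (h : LiesOver u f) (h' : LiesOver u f') : IsIsomorphic A A' ↔ IsIsomorphic B B' := by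
  constructor
  · rintro ⟨e⟩
    have hB : LiesOver (Groupoid.inv u ≫ 𝟙 g₂ ≫ u) (Groupoid.inv f ≫ e.hom.1 ≫ f') :=
      h.inv.comp ((liesOver_hom e.hom).comp h')
    rw [Category.id_comp, Groupoid.inv_comp] at hB
    exact ⟨asIso hB.toHom⟩
  · rintro ⟨e⟩
    have hA : LiesOver (u ≫ 𝟙 g₂ ≫ Groupoid.inv u) (f ≫ e.hom.1 ≫ Groupoid.inv f') :=
      h.comp ((liesOver_hom e.hom).comp h'.inv)
    rw [Category.id_comp, Groupoid.comp_inv] at hA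
    exact ⟨asIso hA.toHom⟩

theorem LiesOver.card_aut_eq {f : A.pt ⟶ B.pt} (h : LiesOver u f) :
    Nat.card (Aut A) = Nat.card (Aut B) := by
  have conj (a : A ⟶ A) : LiesOver (𝟙 g₂) (Groupoid.inv f ≫ a.1 ≫ f) := by
    simpa using h.inv.comp ((liesOver_hom a).comp h)
  have conj_inv (b : B ⟶ B) : LiesOver (𝟙 g₂) (f ≫ b.1 ≫ Groupoid.inv f) := by
    simpa using h.comp ((liesOver_hom b).comp h.inv)
  let e : (A ⟶ A) ≃ (B ⟶ B) :=
    { toFun a := (conj a).toHom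
      invFun b := (conj_inv b).toHom
      left_inv a := Subtype.ext (by simp [LiesOver.toHom])
      right_inv b := Subtype.ext (by simp [LiesOver.toHom]) }
  exact Nat.card_congr
    ((Groupoid.isoEquivHom A A).trans (e.trans (Groupoid.isoEquivHom B B).symm))

theorem card_aut_eq_of_isIsomorphic (h : IsIsomorphic A B) :
    Nat.card (Aut A) = Nat.card (Aut B) :=
  (liesOver_hom h.some.hom).card_aut_eq

section Component

variable {D : Type*} [Category D] {ρ₁ : G₁ ⥤ D} {ρ₂ : G₂ ⥤ D}

def component (σ : P₁ ⋙ ρ₁ ⟶ P₂ ⋙ ρ₂) (H : SpanFib P₁ P₂ g₁ g₂) : ρ₁.obj g₁ ⟶ ρ₂.obj g₂ :=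
  eqToHom (congrArg ρ₁.obj H.over₁).symm ≫ σ.app H.pt ≫ eqToHom (congrArg ρ₂.obj H.over₂)

theorem LiesOver.component_comp (σ : P₁ ⋙ ρ₁ ⟶ P₂ ⋙ ρ₂) {f : A.pt ⟶ B.pt}
    (h : LiesOver u f) : component σ A ≫ ρ₂.map u = component σ B := by
  have nat := σ.naturality f
  simp only [Functor.comp_map, h.1, h.2, Functor.map_comp, eqToHom_map] at nat
  rw [← cancel_mono (eqToHom (congrArg ρ₂.obj B.over₂).symm)]
  simp only [component, Category.assoc, eqToHom_trans, eqToHom_refl, Category.comp_id]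
  rw [← nat]
  simp

theorem component_eq_of_isIsomorphic (σ : P₁ ⋙ ρ₁ ⟶ P₂ ⋙ ρ₂) (h : IsIsomorphic A B) :
    component σ A = component σ B := by
  simpa using (liesOver_hom h.some.hom).component_comp σ

end Component

end SpanFib

open SpanFib

theorem IsFibrantSpan.exists_liesOver {P₁ : 𝒢 ⥤ G₁} {P₂ : 𝒢 ⥤ G₂} {g₁ : G₁} {g₂ : G₂}
    (hfib : IsFibrantSpan P₁ P₂) (u : g₂ ⟶ g₂) (B : SpanFib P₁ P₂ g₁ g₂) :
    ∃ (A : SpanFib P₁ P₂ g₁ g₂) (f : A.pt ⟶ B.pt), LiesOver u f := by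
  obtain ⟨H, f, e₁, e₂, h₁, h₂⟩ :=
    hfib B.pt g₁ g₂ (eqToHom B.over₁.symm) (u ≫ eqToHom B.over₂.symm)
  exact ⟨⟨H, e₁, e₂⟩, f, by rw [h₁, eqToHom_trans], h₂⟩

theorem averaged_component_invariant_general
    (P₁ : 𝒢 ⥤ G₁) (P₂ : 𝒢 ⥤ G₂) (hfib : IsFibrantSpan P₁ P₂)
    (ρ₁ : G₁ ⥤ ModuleCat.{v} ℂ) (ρ₂ : G₂ ⥤ ModuleCat.{v} ℂ)
    (σ : P₁ ⋙ ρ₁ ⟶ P₂ ⋙ ρ₂)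
    (g₁ : G₁) (g₂ : G₂)
    (R : Finset (SpanFib P₁ P₂ g₁ g₂))
    (hR : ∀ H : SpanFib P₁ P₂ g₁ g₂, ∃! r : SpanFib P₁ P₂ g₁ g₂, r ∈ R ∧ Nonempty (H ≅ r)) :
    ∀ g : Aut g₂,
      ((Nat.card (Aut g₂) : ℂ)⁻¹ • ∑ H ∈ R, (Nat.card (Aut H) : ℂ)⁻¹ •
          (eqToHom (congrArg ρ₁.obj H.over₁).symm ≫ σ.app H.pt
            ≫ eqToHom (congrArg ρ₂.obj H.over₂))) ≫ ρ₂.map g.hom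
        = (Nat.card (Aut g₂) : ℂ)⁻¹ • ∑ H ∈ R, (Nat.card (Aut H) : ℂ)⁻¹ •
            (eqToHom (congrArg ρ₁.obj H.over₁).symm ≫ σ.app H.pt
              ≫ eqToHom (congrArg ρ₂.obj H.over₂)) := by
  intro g
  choose T f hf using hfib.exists_liesOver (g₁ := g₁) (Groupoid.inv g.hom)
  have hT (A B) : IsIsomorphic (T A) (T B) ↔ IsIsomorphic A B := (hf A).isIsomorphic_iff (hf B)
  have hT_surj (B) : ∃ A, IsIsomorphic (T A) B := by
    obtain ⟨A, f', hf'⟩ := hfib.exists_liesOver g.hom B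
    exact ⟨A, ((hf A).isIsomorphic_iff hf'.inv).2 ⟨Iso.refl A⟩⟩
  have hcomp (H) : component σ H ≫ ρ₂.map g.hom = component σ (T H) := by
    rw [← (hf H).component_comp σ, Category.assoc, ← Functor.map_comp, Groupoid.inv_comp,
      CategoryTheory.Functor.map_id, Category.comp_id]
  rw [Linear.smul_comp, Preadditive.sum_comp]
  congr 1
  refine (Finset.sum_congr rfl fun H _ => ?_).trans
    (Finset.sum_comp_eq_sum_of_transversal (isIsomorphicSetoid _).iseqv hR
      (F := fun H => (Nat.card (Aut H) : ℂ)⁻¹ • component σ H)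
      (fun A B h => by rw [card_aut_eq_of_isIsomorphic h, component_eq_of_isIsomorphic σ h])
      hT hT_surj)
  rw [Linear.smul_comp, (hf H).card_aut_eq]
  exact congrArg _ (hcomp H)

/-- For a fibrant span of essentially finite groupoids, representations `ρᵢ : Gᵢ → Vect_ℂ`,
a natural transformation `σ : ρ₁P₁ ⇒ ρ₂P₂`, objects `g₁ ∈ G₁`, `g₂ ∈ G₂` and a set `R` of
representatives of the isomorphism classes of the fibre `{g₁|𝒢|g₂}`, the linear map
`S = (1/|Aut(g₂)|) Σ_{H ∈ R} (1/|Aut_{fib}(H)|) σ_H : ρ₁(g₁) → ρ₂(g₂)` takes values in the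
invariant subspace `ρ₂(g₂)^{Aut(g₂)}`, i.e. `ρ₂(g) ∘ S = S` for every `g ∈ Aut(g₂)`. -/
theorem averaged_component_invariant
    (P₁ : 𝒢 ⥤ G₁) (P₂ : 𝒢 ⥤ G₂) (hfib : IsFibrantSpan P₁ P₂)
    (h𝒢 : EssentiallyFinite 𝒢) (hG₁ : EssentiallyFinite G₁) (hG₂ : EssentiallyFinite G₂)
    (ρ₁ : G₁ ⥤ ModuleCat.{v} ℂ) (ρ₂ : G₂ ⥤ ModuleCat.{v} ℂ)
    (σ : P₁ ⋙ ρ₁ ⟶ P₂ ⋙ ρ₂)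
    (g₁ : G₁) (g₂ : G₂)
    (R : Finset (SpanFib P₁ P₂ g₁ g₂))
    (hR : ∀ H : SpanFib P₁ P₂ g₁ g₂, ∃! r : SpanFib P₁ P₂ g₁ g₂, r ∈ R ∧ Nonempty (H ≅ r)) :
    ∀ g : Aut g₂,
      ((Nat.card (Aut g₂) : ℂ)⁻¹ • ∑ H ∈ R, (Nat.card (Aut H) : ℂ)⁻¹ •
          (eqToHom (congrArg ρ₁.obj H.over₁).symm ≫ σ.app H.pt
            ≫ eqToHom (congrArg ρ₂.obj H.over₂))) ≫ ρ₂.map g.hom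
        = (Nat.card (Aut g₂) : ℂ)⁻¹ • ∑ H ∈ R, (Nat.card (Aut H) : ℂ)⁻¹ •
            (eqToHom (congrArg ρ₁.obj H.over₁).symm ≫ σ.app H.pt
              ≫ eqToHom (congrArg ρ₂.obj H.over₂)) :=
  averaged_component_invariant_general P₁ P₂ hfib ρ₁ ρ₂ σ g₁ g₂ R hR
end

section
/- Let G be a finite group acting on a finite set M. Then the category of functors M⫽G → Vect_ℂ (representations of the action groupoid) is equivalent to the category of finite-dimensional modules over the smash product algebra ℂ[G] ⋉ ℂ^M, whose multiplication is (g ⊗ δ_m)·(h ⊗ δ_n) = δ_m(h ▷ n) gh ⊗ δ_n. -/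
open CategoryTheory

set_option linter.unusedSectionVars false

universe u

/-- The action groupoid `M ⫽ G` of a group action: objects are the elements of `M`,
morphisms `m ⟶ m'` are group elements `g` with `g • m = m'`. -/
def ActGrpd (G M : Type u) [Group G] [MulAction G M] : Type u := M

instance (G M : Type u) [Group G] [MulAction G M] : MulAction G (ActGrpd G M) :=
  inferInstanceAs (MulAction G M)

instance actGrpdGroupoid (G M : Type u) [Group G] [MulAction G M] :
    Groupoid (ActGrpd G M) where
  Hom m m' := {g : G // g • m = m'}
  id m := ⟨1, one_smul _ _⟩
  comp f g := ⟨g.1 * f.1, by rw [mul_smul, f.2, g.2]⟩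
  id_comp f := Subtype.ext (mul_one f.1)
  comp_id f := Subtype.ext (one_mul f.1)
  assoc f g h := Subtype.ext (mul_assoc h.1 g.1 f.1).symm
  inv f := ⟨f.1⁻¹, inv_smul_eq_iff.mpr f.2.symm⟩
  inv_comp f := Subtype.ext (mul_inv_cancel f.1)
  comp_inv f := Subtype.ext (inv_mul_cancel f.1)

variable (G M : Type) [Group G] [Fintype G] [Fintype M] [MulAction G M]
  [DecidableEq G] [DecidableEq M]

/-- The underlying vector space of the smash product `ℂ[G] ⋉ ℂ^M`: a basis is given by
the elements `g ⊗ δ_m`, so the underlying space is that of functions `G × M → ℂ`. -/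
def Smash : Type := G × M → ℂ

namespace Smash

instance : AddCommGroup (Smash G M) := inferInstanceAs (AddCommGroup (G × M → ℂ))

/-- The basis element `g ⊗ δ_m` of the smash product. -/
noncomputable def basis (g : G) (m : M) : Smash G M := Pi.single (g, m) 1

/-- The multiplication of the smash product `ℂ[G] ⋉ ℂ^M`, obtained by bilinear extension
of `(g ⊗ δ_m)·(h ⊗ δ_n) = δ_m(h ▷ n) gh ⊗ δ_n`. -/
noncomputable def mul (a b : Smash G M) : Smash G M :=
  fun x => ∑ h : G, a (x.1 * h⁻¹, h • x.2) * b (h, x.2)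

/-- The unit `Σ_m 1 ⊗ δ_m` of the smash product. -/
noncomputable def one : Smash G M := fun x => if x.1 = 1 then 1 else 0

theorem add_apply (a b : Smash G M) (x : G × M) : (a + b) x = a x + b x := rfl

theorem zero_apply (x : G × M) : (0 : Smash G M) x = 0 := rfl

theorem mul_add' (a b c : Smash G M) :
    mul G M a (b + c) = mul G M a b + mul G M a c := by
  funext x
  simp [mul, add_apply, mul_add, Finset.sum_add_distrib]

theorem add_mul' (a b c : Smash G M) :
    mul G M (a + b) c = mul G M a c + mul G M b c := by
  funext x
  simp [mul, add_apply, add_mul, Finset.sum_add_distrib]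

theorem zero_mul' (a : Smash G M) : mul G M 0 a = 0 := by
  funext x
  simp [mul, zero_apply]

theorem mul_zero' (a : Smash G M) : mul G M a 0 = 0 := by
  funext x
  simp [mul, zero_apply]

theorem one_mul' (a : Smash G M) : mul G M (one G M) a = a := by
  funext x
  simp only [mul, one, ite_mul, one_mul, zero_mul, mul_inv_eq_one]
  rw [Finset.sum_ite_eq Finset.univ x.1 (fun h => a (h, x.2))]
  simp

theorem mul_one' (a : Smash G M) : mul G M a (one G M) = a := by
  funext x
  simp only [mul, one, mul_ite, mul_one, mul_zero]
  rw [Finset.sum_ite_eq' Finset.univ (1 : G) (fun h => a (x.1 * h⁻¹, h • x.2))]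
  simp

theorem mul_assoc' (a b c : Smash G M) :
    mul G M (mul G M a b) c = mul G M a (mul G M b c) := by
  funext x
  simp only [mul, Finset.sum_mul, Finset.mul_sum]
  conv_rhs => rw [Finset.sum_comm]
  refine Finset.sum_congr rfl fun h _ => ?_
  refine Fintype.sum_equiv (Equiv.mulRight h) _ _ fun k => ?_
  simp [Equiv.coe_mulRight, mul_smul, mul_inv_rev, mul_inv_cancel_right, mul_assoc]

/-- The smash product algebra `ℂ[G] ⋉ ℂ^M`. -/
noncomputable instance ring : Ring (Smash G M) :=
  { (inferInstance : AddCommGroup (Smash G M)) with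
    mul := mul G M
    one := one G M
    left_distrib := mul_add' G M
    right_distrib := add_mul' G M
    zero_mul := zero_mul' G M
    mul_zero := mul_zero' G M
    one_mul := one_mul' G M
    mul_one := mul_one' G M
    mul_assoc := mul_assoc' G M }

end Smash

/-!
A representation `ρ` of `M ⫽ G` gives the `ℂ[G] ⋉ ℂ^M`-module `⊕_m ρ(m)`, on which `g ⊗ δ_m` sends
the summand `ρ(m)` to `ρ(g • m)` by `ρ(g)` and kills the other summands. A module map commutes
with the idempotents `1 ⊗ δ_m`, hence preserves the summands; this makes the functor fully
faithful. Conversely the idempotents `1 ⊗ δ_m` are orthogonal and sum to `1`, so every module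
`W` is `⊕_m (1 ⊗ δ_m) W`, and the elements `g ⊗ δ_m` make the summands a representation of
`M ⫽ G`; so the functor is essentially surjective. Linearity over the smash product is checked
on the basis `g ⊗ δ_m`.
-/

universe v w₁ w₂

namespace Smash

variable {G M}

lemma mul_apply (a b : Smash G M) (x : G × M) :
    (a * b) x = ∑ h : G, a (x.1 * h⁻¹, h • x.2) * b (h, x.2) := rfl

lemma one_apply (x : G × M) : (1 : Smash G M) x = if x.1 = 1 then 1 else 0 := rfl

lemma basis_apply (g : G) (m : M) (x : G × M) :
    basis G M g m x = if x = (g, m) then 1 else 0 :=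
  Pi.single_apply _ _ _

theorem basis_mul (g h : G) (m n : M) :
    basis G M g m * basis G M h n = if m = h • n then basis G M (g * h) n else 0 := by
  funext ⟨k, n'⟩
  rw [mul_apply, Fintype.sum_eq_single h fun h' hh' => by simp [basis_apply, hh']]
  split_ifs with hm
  · subst hm
    simp only [basis_apply, Prod.mk.injEq, mul_inv_eq_iff_eq_mul]
    by_cases hn : n' = n <;> simp [hn]
  · simp only [basis_apply, Prod.mk.injEq, mul_ite, mul_one, mul_zero, ite_and]
    split_ifs <;> simp_all [zero_apply]

lemma basis_mul_basis_of_smul_eq {g h : G} {m n : M} (hm : h • n = m) :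
    basis G M g m * basis G M h n = basis G M (g * h) n := by
  rw [basis_mul, if_pos hm.symm]

noncomputable instance : Module ℂ (Smash G M) := inferInstanceAs (Module ℂ (G × M → ℂ))

lemma smul_apply (c : ℂ) (a : Smash G M) (x : G × M) : (c • a) x = c * a x := rfl

noncomputable instance : Algebra ℂ (Smash G M) :=
  Algebra.ofModule
    (fun c a b => funext fun x => by simp only [smul_apply, mul_apply, Finset.mul_sum, mul_assoc])
    (fun c a b => funext fun x => by
      simp only [smul_apply, mul_apply, Finset.mul_sum, mul_left_comm c])

instance : Module.Finite ℂ (Smash G M) := inferInstanceAs (Module.Finite ℂ (G × M → ℂ))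

lemma sum_apply {ι : Type*} (s : Finset ι) (f : ι → Smash G M) (x : G × M) :
    (∑ i ∈ s, f i) x = ∑ i ∈ s, f i x :=
  Finset.sum_apply (M := fun _ : G × M => ℂ) x s f

lemma sum_smul_basis (a : Smash G M) : ∑ p : G × M, a p • basis G M p.1 p.2 = a := by
  funext x
  rw [sum_apply, Fintype.sum_eq_single x fun p hp => by simp [smul_apply, basis_apply, hp.symm]]
  simp [smul_apply, basis_apply]

lemma sum_basis_one : ∑ m : M, basis G M 1 m = 1 := by
  funext ⟨k, n⟩
  rw [sum_apply, Fintype.sum_eq_single n fun m hm => by simp [basis_apply, Ne.symm hm]]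
  simp [basis_apply, one_apply, eq_comm (a := k)]

theorem map_smul_of_map_basis_smul {V W : Type*} [AddCommMonoid V] [Module (Smash G M) V]
    [Module ℂ V] [IsScalarTower ℂ (Smash G M) V] [AddCommMonoid W] [Module (Smash G M) W]
    [Module ℂ W] [IsScalarTower ℂ (Smash G M) W] (f : V →ₗ[ℂ] W)
    (hf : ∀ g m v, f (basis G M g m • v) = basis G M g m • f v) (a : Smash G M) (v : V) :
    f (a • v) = a • f v := by
  rw [← sum_smul_basis a]
  simp only [Finset.sum_smul, smul_assoc, map_sum, map_smul, hf]

end Smash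

namespace ActGrpd

lemma map_mk_apply_map_mk {G M : Type u} [Group G] [MulAction G M] {R : Type*} [Ring R]
    (F : ActGrpd G M ⥤ FGModuleCat.{v} R) {m₀ m₁ m₂ : ActGrpd G M} (g h : G)
    (p₁ : h • m₀ = m₁) (p₂ : g • m₁ = m₂) (x : F.obj m₀) :
    F.map (⟨g, p₂⟩ : m₁ ⟶ m₂) (F.map (⟨h, p₁⟩ : m₀ ⟶ m₁) x)
      = F.map (⟨g * h, by rw [mul_smul, p₁, p₂]⟩ : m₀ ⟶ m₂) x := by
  rw [← ConcreteCategory.comp_apply, ← F.map_comp]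
  rfl

lemma map_one_apply {G M : Type u} [Group G] [MulAction G M] {R : Type*} [Ring R]
    (F : ActGrpd G M ⥤ FGModuleCat.{v} R) {m : ActGrpd G M} (h : (1 : G) • m = m)
    (x : F.obj m) : F.map (⟨1, h⟩ : m ⟶ m) x = x := by
  rw [show (⟨1, h⟩ : m ⟶ m) = 𝟙 m from rfl, F.map_id, ConcreteCategory.id_apply]

lemma map_apply_congr {G M : Type u} [Group G] [MulAction G M] {R : Type*} [Ring R]
    (F : ActGrpd G M ⥤ FGModuleCat.{v} R) (v : ∀ m, F.obj m) {m₁ m₂ m' : ActGrpd G M}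
    (φ₁ : m₁ ⟶ m') (φ₂ : m₂ ⟶ m') (hm : m₁ = m₂) (hφ : φ₁.1 = φ₂.1) :
    F.map φ₁ (v m₁) = F.map φ₂ (v m₂) := by
  subst hm
  obtain rfl : φ₁ = φ₂ := Subtype.ext hφ
  rfl

instance {G M : Type u} [Group G] [MulAction G M] [Fintype M] : Fintype (ActGrpd G M) :=
  inferInstanceAs (Fintype M)

instance {G M : Type u} [Group G] [MulAction G M] [DecidableEq M] :
    DecidableEq (ActGrpd G M) :=
  inferInstanceAs (DecidableEq M)

variable {G M}

variable (F : ActGrpd G M ⥤ FGModuleCat.{v} ℂ)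

/-- The module `⊕_m ρ(m)` of the representation `ρ = F`. -/
abbrev TotalSpace : Type v := ∀ m : ActGrpd G M, F.obj m

noncomputable instance : SMul (Smash G M) (TotalSpace F) where
  smul a v m' := ∑ g : G, a (g, g⁻¹ • m') • F.map ⟨g, smul_inv_smul g m'⟩ (v (g⁻¹ • m'))

variable {F}

lemma smash_smul_apply (a : Smash G M) (v : TotalSpace F) (m' : ActGrpd G M) :
    (a • v) m' = ∑ g : G, a (g, g⁻¹ • m') • F.map ⟨g, smul_inv_smul g m'⟩ (v (g⁻¹ • m')) :=
  rfl

-- Stated for points of `ActGrpd G M` rather than `M`, so that it rewrites the coefficients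
-- produced by `smash_smul_apply`.
lemma basis_apply_mk_inv_smul (g k : G) (m m' : ActGrpd G M) :
    Smash.basis G M g m (k, k⁻¹ • m') = if k = g ∧ k • m = m' then 1 else 0 := by
  rw [Smash.basis_apply (M := M) g m]
  refine if_congr ?_ rfl rfl
  exact Prod.mk_inj.trans (and_congr_right fun hk => hk ▸ inv_smul_eq_iff.trans eq_comm)

lemma basis_smul_apply (g : G) (m m' : ActGrpd G M) (v : TotalSpace F) :
    (Smash.basis G M g m • v) m' = if h : g • m = m' then F.map ⟨g, h⟩ (v m) else 0 := by
  rw [smash_smul_apply, Fintype.sum_eq_single g fun k hk => by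
    rw [basis_apply_mk_inv_smul, if_neg fun h => hk h.1, zero_smul]]
  rw [basis_apply_mk_inv_smul]
  split_ifs with hk hgm hgm
  · rw [one_smul]
    exact map_apply_congr F v _ _ (inv_smul_eq_iff.2 hgm.symm) rfl
  · exact absurd hk.2 hgm
  · exact absurd ⟨rfl, hgm⟩ hk
  · exact zero_smul _ _

lemma basis_smul_apply_smul (g : G) (m : ActGrpd G M) (v : TotalSpace F) :
    (Smash.basis G M g m • v) (g • m) = F.map ⟨g, rfl⟩ (v m) := by
  rw [basis_smul_apply, dif_pos rfl]

lemma basis_smul_apply_of_ne {g : G} {m m' : ActGrpd G M} (h : g • m ≠ m')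
    (v : TotalSpace F) : (Smash.basis G M g m • v) m' = 0 := by
  rw [basis_smul_apply, dif_neg h]

lemma totalSpace_one_smul (v : TotalSpace F) : (1 : Smash G M) • v = v := by
  funext m'
  rw [smash_smul_apply, Fintype.sum_eq_single 1 fun g hg => by simp [Smash.one_apply, hg],
    Smash.one_apply, if_pos rfl, one_smul]
  refine (map_apply_congr F v _ (𝟙 m') ?_ ?_).trans ?_
  · rw [inv_one, one_smul]
  · rfl
  · rw [F.map_id, ConcreteCategory.id_apply]

lemma totalSpace_mul_smul (a b : Smash G M) (v : TotalSpace F) : (a * b) • v = a • b • v := by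
  funext m'
  simp only [smash_smul_apply, Smash.mul_apply, map_sum, map_smul, Finset.smul_sum,
    Finset.sum_smul, smul_smul]
  conv_lhs => rw [Finset.sum_comm]
  conv_rhs => rw [Finset.sum_comm]
  refine Finset.sum_congr rfl fun h _ => Fintype.sum_equiv (Equiv.mulRight h⁻¹) _ _ fun k => ?_
  simp only [Equiv.coe_mulRight]
  congr 1
  · -- the two sides differ only in the (defeq) actions of `G` on `M` and on `ActGrpd G M`
    rw [mul_inv_rev, inv_inv, inv_mul_cancel_left, mul_smul]
    rfl
  · refine (map_apply_congr F v _ _ ?_ ?_).trans (map_mk_apply_map_mk F _ _ _ _ _).symm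
    · simp [mul_smul]
    · simp

variable (F)

noncomputable instance : Module (Smash G M) (TotalSpace F) where
  one_smul := totalSpace_one_smul
  mul_smul := totalSpace_mul_smul
  smul_zero _ := funext fun _ => by simp [smash_smul_apply]
  smul_add _ _ _ := funext fun _ => by simp [smash_smul_apply, Finset.sum_add_distrib]
  add_smul _ _ _ := funext fun _ => by
    simp [smash_smul_apply, Smash.add_apply, add_smul, Finset.sum_add_distrib]
  zero_smul _ := funext fun _ => by simp [smash_smul_apply, Smash.zero_apply]

instance : IsScalarTower ℂ (Smash G M) (TotalSpace F) where
  smul_assoc _ _ _ := funext fun _ => by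
    simp only [smash_smul_apply, Smash.smul_apply, Pi.smul_apply, Finset.smul_sum, mul_smul]

instance : Module.Finite (Smash G M) (TotalSpace F) :=
  Module.Finite.of_restrictScalars_finite ℂ _ _

variable {F}

lemma basis_one_smul (m : ActGrpd G M) (v : TotalSpace F) :
    Smash.basis G M 1 m • v = Pi.single m (v m) := by
  funext m'
  rw [basis_smul_apply]
  split_ifs with h
  · obtain rfl : m = m' := (one_smul G m).symm.trans h
    rw [Pi.single_eq_same, map_one_apply]
  · rw [Pi.single_eq_of_ne (by simpa using Ne.symm h)]

variable {F' : ActGrpd G M ⥤ FGModuleCat.{v} ℂ}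

lemma linearMap_single_apply_self
    (f : TotalSpace F →ₗ[Smash G M] TotalSpace F') (v : TotalSpace F) (m : ActGrpd G M) :
    f (Pi.single m (v m)) m = f v m := by
  rw [← basis_one_smul, map_smul, basis_one_smul, Pi.single_eq_same]

noncomputable def mapTotalSpace (η : F ⟶ F') : TotalSpace F →ₗ[Smash G M] TotalSpace F' where
  toFun v m := η.app m (v m)
  map_add' _ _ := funext fun _ => map_add _ _ _
  map_smul' a v := funext fun m' => by
    simp only [smash_smul_apply, map_sum, map_smul, RingHom.id_apply]
    refine Finset.sum_congr rfl fun g _ => congrArg _ ?_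
    exact ConcreteCategory.congr_hom (η.naturality _) _

variable (G M) in
noncomputable def toSmashModule :
    (ActGrpd G M ⥤ FGModuleCat.{v} ℂ) ⥤ FGModuleCat.{v} (Smash G M) where
  obj F := FGModuleCat.of (Smash G M) (TotalSpace F)
  map η := FGModuleCat.ofHom (mapTotalSpace η)

instance : (toSmashModule.{v} G M).Faithful where
  map_injective {F F'} η η' h := by
    ext m x
    calc η.app m x = mapTotalSpace η (Pi.single m x) m := by simp [mapTotalSpace]
      _ = mapTotalSpace η' (Pi.single m x) m := congr_fun (ConcreteCategory.congr_hom h _) m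
      _ = η'.app m x := by simp [mapTotalSpace]

noncomputable def natTransOfLinearMap (f : TotalSpace F →ₗ[Smash G M] TotalSpace F') :
    F ⟶ F' where
  app m := FGModuleCat.ofHom <|
    LinearMap.proj m ∘ₗ f.restrictScalars ℂ ∘ₗ LinearMap.single ℂ (fun m => F.obj m) m
  naturality m m' φ := by
    obtain ⟨g, rfl⟩ := φ
    ext x
    change f (Pi.single (g • m) (F.map ⟨g, rfl⟩ x)) (g • m)
      = F'.map ⟨g, rfl⟩ (f (Pi.single m x) m)
    have hx : F.map ⟨g, rfl⟩ x
        = (Smash.basis G M g m • (Pi.single m x : TotalSpace F)) (g • m) := by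
      rw [basis_smul_apply_smul, Pi.single_eq_same]
    rw [hx, linearMap_single_apply_self, map_smul, basis_smul_apply_smul]

instance : (toSmashModule.{v} G M).Full where
  map_surjective {F F'} f := by
    refine ⟨natTransOfLinearMap f.hom.hom, ?_⟩
    ext v
    funext m
    exact linearMap_single_apply_self f.hom.hom v m

end ActGrpd

namespace Smash

variable {G M} (W : FGModuleCat.{v} (Smash G M))

noncomputable instance : Module ℂ W := Module.compHom W (algebraMap ℂ (Smash G M))

instance : IsScalarTower ℂ (Smash G M) W where
  smul_assoc c a w := by
    change (c • a) • w = algebraMap ℂ (Smash G M) c • a • w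
    rw [Algebra.smul_def, mul_smul]

instance : Module.Finite ℂ W := Module.Finite.trans (Smash G M) W

noncomputable def component (m : M) : Submodule ℂ W :=
  LinearMap.range (DistribSMul.toLinearMap ℂ W (basis G M 1 m))

variable {W}

lemma basis_one_smul_of_mem_component {m : M} {w : W} (hw : w ∈ component W m) :
    basis G M 1 m • w = w := by
  obtain ⟨w, rfl⟩ := hw
  change basis G M 1 m • basis G M 1 m • w = basis G M 1 m • w
  rw [← mul_smul, basis_mul_basis_of_smul_eq (one_smul G m), one_mul]

lemma basis_smul_mem_component {g : G} {m m' : M} (h : g • m = m') (w : W) :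
    basis G M g m • w ∈ component W m' :=
  ⟨basis G M g m • w, by
    change basis G M 1 m' • basis G M g m • w = _
    rw [← mul_smul, basis_mul_basis_of_smul_eq h, one_mul]⟩

lemma basis_smul_eq_zero_of_mem_component {g : G} {m n : M} (h : m ≠ n) {w : W}
    (hw : w ∈ component W n) : basis G M g m • w = 0 := by
  rw [← basis_one_smul_of_mem_component hw, ← mul_smul, basis_mul,
    if_neg (by rwa [one_smul]), zero_smul]

variable (W)

noncomputable def toActGrpdRep : ActGrpd G M ⥤ FGModuleCat.{v} ℂ where
  obj m := FGModuleCat.of ℂ (component W m)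
  map {m m'} φ := FGModuleCat.ofHom <|
    (DistribSMul.toLinearMap ℂ W (basis G M φ.1 m)).restrict fun w _ =>
      basis_smul_mem_component (M := M) φ.2 w
  map_id m := by
    ext ⟨w, hw⟩
    exact basis_one_smul_of_mem_component hw
  map_comp {m m' m''} φ ψ := by
    ext w
    change basis G M (ψ.1 * φ.1) m • (w : W) = basis G M ψ.1 m' • basis G M φ.1 m • (w : W)
    rw [← mul_smul, basis_mul_basis_of_smul_eq (M := M) φ.2]

noncomputable def sumComponents : ActGrpd.TotalSpace (toActGrpdRep W) →ₗ[ℂ] W where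
  toFun v := ∑ m : ActGrpd G M, (component W m).subtype (v m)
  map_add' _ _ := by
    rw [← Finset.sum_add_distrib]
    rfl
  map_smul' _ _ := by
    rw [RingHom.id_apply, Finset.smul_sum]
    rfl

lemma sumComponents_basis_smul (g : G) (m : ActGrpd G M)
    (v : ActGrpd.TotalSpace (toActGrpdRep W)) :
    sumComponents W (basis G M g m • v) = basis G M g m • sumComponents W v := by
  calc sumComponents W (basis G M g m • v)
      = (component W (g • m)).subtype ((basis G M g m • v) (g • m)) :=
        Fintype.sum_eq_single (g • m) fun m' hm' => by
          rw [ActGrpd.basis_smul_apply_of_ne (Ne.symm hm')]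
          rfl
    _ = basis G M g m • (component W m).subtype (v m) :=
        congrArg Subtype.val (ActGrpd.basis_smul_apply_smul g m v)
    _ = basis G M g m • ∑ n : ActGrpd G M, (component W n).subtype (v n) := by
        rw [Finset.smul_sum]
        refine Eq.symm (Fintype.sum_eq_single m fun n hn => ?_)
        exact basis_smul_eq_zero_of_mem_component (M := M) (Ne.symm hn) (v n).2

noncomputable def totalSpaceEquiv : ActGrpd.TotalSpace (toActGrpdRep W) ≃ₗ[Smash G M] W where
  toFun := sumComponents W
  map_add' := map_add _
  map_smul' := map_smul_of_map_basis_smul _ (sumComponents_basis_smul W)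
  invFun w m := ⟨basis G M 1 m • w, w, rfl⟩
  left_inv v := funext fun m => Subtype.ext <| by
    refine (Finset.smul_sum.trans (Fintype.sum_eq_single m fun n hn => ?_)).trans ?_
    · exact basis_smul_eq_zero_of_mem_component (M := M) (Ne.symm hn) (v n).2
    · exact basis_one_smul_of_mem_component (v m).2
  right_inv w := by
    change ∑ m : M, basis G M 1 m • w = w
    rw [← Finset.sum_smul, sum_basis_one, one_smul]

instance : (ActGrpd.toSmashModule.{v} G M).EssSurj where
  mem_essImage W := ⟨toActGrpdRep W, ⟨(totalSpaceEquiv W).toFGModuleCatIso⟩⟩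

end Smash

noncomputable def FGModuleCat.universeEquiv (R : Type) [Ring R] :
    FGModuleCat.{w₁} R ≌ FGModuleCat.{w₂} R :=
  (FGModuleCat.ulift.{0, w₁} R).asEquivalence.symm.trans
    (FGModuleCat.ulift.{0, w₂} R).asEquivalence

/-- For a finite group `G` acting on a finite set `M`, the multiplication of the smash
product `ℂ[G] ⋉ ℂ^M` satisfies `(g ⊗ δ_m)·(h ⊗ δ_n) = δ_m(h ▷ n) gh ⊗ δ_n` on basis
elements, and the category of representations of the action groupoid `M ⫽ G` by
finite-dimensional complex vector spaces is equivalent to the category of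
finite-dimensional modules over `ℂ[G] ⋉ ℂ^M`. -/
theorem actionGroupoid_representations_equiv_smash_modules :
    (∀ (g h : G) (m n : M),
        Smash.basis G M g m * Smash.basis G M h n
          = if m = h • n then Smash.basis G M (g * h) n else 0) ∧
    Nonempty ((ActGrpd G M ⥤ FGModuleCat ℂ) ≌ FGModuleCat (Smash G M)) := by
  have : (ActGrpd.toSmashModule G M).IsEquivalence := {}
  exact ⟨Smash.basis_mul,
    ⟨(ActGrpd.toSmashModule G M).asEquivalence.trans (FGModuleCat.universeEquiv _)⟩⟩
end

section
/- Let Q and Q' be graded graphs and f : Q → Q' an insertion, i.e. a degree-preserving graph map inducing isomorphisms from the subgraph generated by each vertex v onto the subgraph generated by f(v). Then the induced functor F : Q → Q' between the free categories generated by Q and Q' is a discrete opfibration: for every morphism q' : y' → z' in Q' and every object y with F(y) = y', there is a unique morphism q in Q with source y and F(q) = q'. -/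
universe u

/-- A (finite-type-free) graph with source and target maps. -/
structure Graph' : Type (u + 1) where
  V : Type u
  E : Type u
  s : E → V
  t : E → V

/-- A graph map: maps on vertices and edges commuting with source and target. -/
structure GraphHom (Q Q' : Graph'.{u}) : Type u where
  vMap : Q.V → Q'.V
  eMap : Q.E → Q'.E
  s_comm : ∀ e : Q.E, Q'.s (eMap e) = vMap (Q.s e)
  t_comm : ∀ e : Q.E, Q'.t (eMap e) = vMap (Q.t e)

/-- Reachability: `Reach Q v w` holds if there is a (possibly empty) path in `Q` from
`v` to `w`.  The vertices reachable from `v` are those of the subgraph generated by `v`. -/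
inductive Reach (Q : Graph'.{u}) : Q.V → Q.V → Prop
  | refl (v : Q.V) : Reach Q v v
  | step {v w : Q.V} (e : Q.E) : Reach Q v w → Q.s e = w → Reach Q v (Q.t e)

/-- A graded graph: a degree function on vertices dropping by one along every edge. -/
def IsGraded (Q : Graph'.{u}) (deg : Q.V → ℕ) : Prop :=
  ∀ e : Q.E, deg (Q.s e) = deg (Q.t e) + 1

/-- An insertion of graded graphs: a degree-preserving graph map that restricts to an
isomorphism from the subgraph generated by each vertex `v` onto the subgraph generated
by `f(v)` (bijectively on both the vertices and the edges of these subgraphs). -/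
def IsInsertion {Q Q' : Graph'.{u}} (degQ : Q.V → ℕ) (degQ' : Q'.V → ℕ)
    (f : GraphHom Q Q') : Prop :=
  (∀ v : Q.V, degQ' (f.vMap v) = degQ v) ∧
  (∀ v : Q.V,
    Set.BijOn f.vMap {w | Reach Q v w} {w' | Reach Q' (f.vMap v) w'} ∧
    Set.BijOn f.eMap {e | Reach Q v (Q.s e)} {e' | Reach Q' (f.vMap v) (Q'.s e')})

/-- The quiver underlying a graph: arrows `a ⟶ b` are the edges with source `a` and
target `b`.  Morphisms of the free category generated by the graph are the paths of this
quiver. -/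
instance graphQuiver (Q : Graph'.{u}) : Quiver Q.V :=
  ⟨fun a b => {e : Q.E // Q.s e = a ∧ Q.t e = b}⟩

/-- The prefunctor induced by a graph map, whose extension to paths is the induced
functor between the free categories generated by the graphs. -/
def graphHomPrefunctor {Q Q' : Graph'.{u}} (f : GraphHom Q Q') : Q.V ⥤q Q'.V where
  obj := f.vMap
  map e := ⟨f.eMap e.1, by rw [f.s_comm, e.2.1], by rw [f.t_comm, e.2.2]⟩

/-! Injectivity of `f` on the vertices reachable from `v`, together with the bijection on the
edges leaving them, says that every edge out of `f v` is the image of exactly one edge out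
of `v`. Unique lifting of edges gives unique lifting of paths by induction: a path is lifted
edge by edge, and two lifts of the same path agree because their prefixes do, by induction,
and then so do their last edges. -/
namespace Quiver.Path

variable {V : Type*} [Quiver V] {a : V}

theorem sigma_eq_of_sigma_cons_eq {b₁ b₂ c₁ c₂ : V} {p₁ : Path a b₁} {p₂ : Path a b₂}
    {e₁ : b₁ ⟶ c₁} {e₂ : b₂ ⟶ c₂}
    (h : (⟨c₁, p₁.cons e₁⟩ : Σ c, Path a c) = ⟨c₂, p₂.cons e₂⟩) :
    (⟨b₁, p₁⟩ : Σ b, Path a b) = ⟨b₂, p₂⟩ := by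
  obtain ⟨rfl, h⟩ := Sigma.mk.inj_iff.mp h
  cases eq_of_heq h
  rfl

theorem sigma_cons_eq_sigma_cons_iff {b c₁ c₂ : V} {p : Path a b} {e₁ : b ⟶ c₁}
    {e₂ : b ⟶ c₂} :
    (⟨c₁, p.cons e₁⟩ : Σ c, Path a c) = ⟨c₂, p.cons e₂⟩ ↔
      (⟨c₁, e₁⟩ : Σ c, b ⟶ c) = ⟨c₂, e₂⟩ := by
  constructor
  · intro h
    obtain ⟨rfl, h⟩ := Sigma.mk.inj_iff.mp h
    cases eq_of_heq h
    rfl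
  · rintro ⟨⟩
    rfl

end Quiver.Path

namespace Prefunctor

variable {V : Type*} [Quiver V] {W : Type*} [Quiver W]

def HasUniqueArrowLifts (F : V ⥤q W) : Prop :=
  ∀ (a : V) (b' : W) (e' : F.obj a ⟶ b'),
    ∃! be : Σ b, a ⟶ b, (⟨F.obj be.1, F.map be.2⟩ : Σ w, F.obj a ⟶ w) = ⟨b', e'⟩

def HasUniquePathLifts (F : V ⥤q W) : Prop :=
  ∀ (a : V) (b' : W) (p' : Quiver.Path (F.obj a) b'),
    ∃! bp : Σ b, Quiver.Path a b,
      (⟨F.obj bp.1, F.mapPath bp.2⟩ : Σ w, Quiver.Path (F.obj a) w) = ⟨b', p'⟩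

@[simp]
theorem length_mapPath (F : V ⥤q W) {a b : V} (p : Quiver.Path a b) :
    (F.mapPath p).length = p.length := by
  induction p with
  | nil => rfl
  | cons p e ih => simp [ih]

variable {F : V ⥤q W}

theorem HasUniqueArrowLifts.exists_path_lift (hF : F.HasUniqueArrowLifts) {a : V} {b' : W}
    (p' : Quiver.Path (F.obj a) b') :
    ∃ bp : Σ b, Quiver.Path a b,
      (⟨F.obj bp.1, F.mapPath bp.2⟩ : Σ w, Quiver.Path (F.obj a) w) = ⟨b', p'⟩ := by
  induction p' with
  | nil => exact ⟨⟨a, .nil⟩, rfl⟩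
  | cons p' e' ih =>
    obtain ⟨⟨b, p⟩, h⟩ := ih
    obtain ⟨rfl, h⟩ := Sigma.mk.inj_iff.mp h
    cases eq_of_heq h
    obtain ⟨⟨c, e⟩, h, -⟩ := hF b _ e'
    obtain ⟨rfl, h⟩ := Sigma.mk.inj_iff.mp h
    cases eq_of_heq h
    exact ⟨⟨c, p.cons e⟩, rfl⟩

theorem HasUniqueArrowLifts.sigma_eq_of_mapPath (hF : F.HasUniqueArrowLifts) {a b₁ b₂ : V}
    (p₁ : Quiver.Path a b₁) (p₂ : Quiver.Path a b₂)
    (h : (⟨F.obj b₁, F.mapPath p₁⟩ : Σ w, Quiver.Path (F.obj a) w) =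
      ⟨F.obj b₂, F.mapPath p₂⟩) :
    (⟨b₁, p₁⟩ : Σ b, Quiver.Path a b) = ⟨b₂, p₂⟩ := by
  induction p₁ generalizing b₂ with
  | nil =>
    cases p₂ with
    | nil => rfl
    | cons => simpa using congrArg (fun x => x.2.length) h
  | cons p₁ e₁ ih =>
    cases p₂ with
    | nil => simpa using congrArg (fun x => x.2.length) h
    | cons p₂ e₂ =>
      simp only [mapPath_cons] at h
      have hp := ih p₂ (Quiver.Path.sigma_eq_of_sigma_cons_eq h)
      obtain ⟨rfl, hp⟩ := Sigma.mk.inj_iff.mp hp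
      cases eq_of_heq hp
      have he := Quiver.Path.sigma_cons_eq_sigma_cons_iff.mp h
      obtain ⟨rfl, he⟩ := Sigma.mk.inj_iff.mp ((hF _ _ (F.map e₁)).unique he.symm rfl)
      cases eq_of_heq he
      rfl

theorem HasUniqueArrowLifts.hasUniquePathLifts (hF : F.HasUniqueArrowLifts) :
    F.HasUniquePathLifts := fun _ _ p' =>
  let ⟨bp, h⟩ := hF.exists_path_lift p'
  ⟨bp, h, fun _ hq => hF.sigma_eq_of_mapPath _ _ (hq.trans h.symm)⟩

end Prefunctor

def GraphHom.HasUniqueEdgeLifts {Q Q' : Graph'.{u}} (f : GraphHom Q Q') : Prop :=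
  ∀ (v : Q.V) (e' : Q'.E), Q'.s e' = f.vMap v → ∃! e : Q.E, Q.s e = v ∧ f.eMap e = e'

theorem IsInsertion.hasUniqueEdgeLifts {Q Q' : Graph'.{u}} {degQ : Q.V → ℕ}
    {degQ' : Q'.V → ℕ} {f : GraphHom Q Q'} (hf : IsInsertion degQ degQ' f) :
    f.HasUniqueEdgeLifts := by
  intro v e' hs'
  obtain ⟨hvert, hedge⟩ := hf.2 v
  obtain ⟨e, he, rfl⟩ := hedge.surjOn (show Reach Q' (f.vMap v) (Q'.s e') from hs' ▸ .refl _)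
  have hs : Q.s e = v := hvert.injOn he (.refl v) (by rw [← f.s_comm, hs'])
  refine ⟨e, ⟨hs, rfl⟩, fun e₂ ⟨hs₂, he₂⟩ => hedge.injOn ?_ he he₂⟩
  show Reach Q v (Q.s e₂)
  exact hs₂ ▸ .refl v

theorem graphQuiver_sigma_ext {Q : Graph'.{u}} {a : Q.V} {x y : Σ b, a ⟶ b}
    (h : x.2.1 = y.2.1) : x = y :=
  match x, y, h with
  | ⟨_, _, _, rfl⟩, ⟨_, _, _, rfl⟩, rfl => rfl

theorem GraphHom.HasUniqueEdgeLifts.hasUniqueArrowLifts {Q Q' : Graph'.{u}}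
    {f : GraphHom Q Q'} (hf : f.HasUniqueEdgeLifts) :
    (graphHomPrefunctor f).HasUniqueArrowLifts := by
  rintro a _ ⟨e', hs', rfl⟩
  obtain ⟨e, ⟨hs, rfl⟩, huniq⟩ := hf a e' hs'
  refine ⟨⟨Q.t e, e, hs, rfl⟩, graphQuiver_sigma_ext rfl, fun x hx => graphQuiver_sigma_ext ?_⟩
  exact huniq x.2.1 ⟨x.2.2.1, congrArg (fun y => y.2.1) hx⟩

theorem insertion_induces_discrete_opfibration_general {Q Q' : Graph'.{u}}
    (degQ : Q.V → ℕ) (degQ' : Q'.V → ℕ)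
    (f : GraphHom Q Q') (hf : IsInsertion degQ degQ' f) :
    ∀ (y : Q.V) (z' : Q'.V) (q' : Quiver.Path ((graphHomPrefunctor f).obj y) z'),
      ∃! zp : Σ z : Q.V, Quiver.Path y z,
        (⟨(graphHomPrefunctor f).obj zp.1, (graphHomPrefunctor f).mapPath zp.2⟩
            : Σ w : Q'.V, Quiver.Path ((graphHomPrefunctor f).obj y) w)
          = ⟨z', q'⟩ :=
  hf.hasUniqueEdgeLifts.hasUniqueArrowLifts.hasUniquePathLifts

/-- For an insertion `f : Q → Q'` of graded graphs, the induced functor between the free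
categories generated by `Q` and `Q'` is a discrete opfibration: every morphism (path)
`q' : f(y) → z'` of the free category on `Q'` has a unique lift with source `y`. -/
theorem insertion_induces_discrete_opfibration {Q Q' : Graph'.{u}}
    (degQ : Q.V → ℕ) (degQ' : Q'.V → ℕ)
    (hQ : IsGraded Q degQ) (hQ' : IsGraded Q' degQ')
    (f : GraphHom Q Q') (hf : IsInsertion degQ degQ' f) :
    ∀ (y : Q.V) (z' : Q'.V) (q' : Quiver.Path ((graphHomPrefunctor f).obj y) z'),
      ∃! zp : Σ z : Q.V, Quiver.Path y z,
        (⟨(graphHomPrefunctor f).obj zp.1, (graphHomPrefunctor f).mapPath zp.2⟩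
            : Σ w : Q'.V, Quiver.Path ((graphHomPrefunctor f).obj y) w)
          = ⟨z', q'⟩ :=
  insertion_induces_discrete_opfibration_general degQ degQ' f hf
end
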